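/- Let L(t,x,ẋ) = L⁰(t,ẋ) + q(t)ᵀx with L⁰ and its ẋ-partial derivative continuous and q continuous. Suppose x̄ : [t₀,t₁] → ℝⁿ is piecewise C¹, satisfies the integral Euler equation L⁰_ẋ(t, x̄'(t)) - ∫_{t₀}^t q(ν) dν = c for a constant vector c, and the Weierstrass excess function satisfies E(L⁰)(t, x̄'(t), x̄'(t) + ξ) ≥ 0 for all ξ ∈ ℝⁿ and all non-corner t. Then for every piecewise C¹ function x with x(t₀) = x̄(t₀) and x(t₁) = x̄(t₁): ∫_{t₀}^{t₁} L(t,x(t),x'(t)) dt ≥ ∫_{t₀}^{t₁} L(t,x̄(t),x̄'(t)) dt. -/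

import Mathlib

/-!
Put `P t = c + ∫_{t₀}^t q`. The Euler equation says `P t = L⁰_ẋ(t, x̄'(t))`, so the Weierstrass
condition says that `P t` is a subgradient of `L⁰(t, ·)` at `x̄'(t)`. Since `P' = q`, the
integrand `⟪q, Δx⟫ + ⟪P, Δx'⟫` is the derivative of `⟪P, Δx⟫`, whose integral vanishes by the
boundary conditions; hence the increment of the functional is the integral of
`L⁰(t, x') - L⁰(t, x̄') - ⟪P, x' - x̄'⟫ ≥ 0`.
-/

open RealInnerProductSpace

/-- Piecewise C¹ on `[a,b]` with the (finite) corner set `S` given explicitly. -/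
def PiecewiseC1On {E : Type*} [NormedAddCommGroup E] [NormedSpace ℝ E]
    (a b : ℝ) (S : Finset ℝ) (x dx : ℝ → E) : Prop :=
  ContinuousOn x (Set.Icc a b) ∧
  (∃ M : ℝ, ∀ t ∈ Set.Icc a b, ‖dx t‖ ≤ M) ∧
  (∀ t ∈ Set.Icc a b \ (S : Set ℝ), HasDerivWithinAt x (dx t) (Set.Icc a b) t) ∧
  ContinuousOn dx (Set.Icc a b \ (S : Set ℝ))

open MeasureTheory Set

namespace PiecewiseC1On

variable {E : Type*} [NormedAddCommGroup E] {a b : ℝ} {S S' : Finset ℝ} {x dx y dy : ℝ → E}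

section NormedSpace

variable [NormedSpace ℝ E]

theorem sub (hx : PiecewiseC1On a b S x dx) (hy : PiecewiseC1On a b S' y dy) :
    PiecewiseC1On a b (S ∪ S') (x - y) (dx - dy) := by
  obtain ⟨hxc, ⟨M, hM⟩, hxd, hdxc⟩ := hx
  obtain ⟨hyc, ⟨M', hM'⟩, hyd, hdyc⟩ := hy
  have hleft : Icc a b \ ((S ∪ S' : Finset ℝ) : Set ℝ) ⊆ Icc a b \ S := by
    gcongr; simp
  have hright : Icc a b \ ((S ∪ S' : Finset ℝ) : Set ℝ) ⊆ Icc a b \ S' := by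
    gcongr; simp
  refine ⟨hxc.sub hyc, ⟨M + M', fun t ht => ?_⟩, fun t ht => ?_, ?_⟩
  · exact (norm_sub_le _ _).trans (add_le_add (hM t ht) (hM' t ht))
  · exact (hxd t (hleft ht)).sub (hyd t (hright ht))
  · exact (hdxc.mono hleft).sub (hdyc.mono hright)

theorem hasDerivAt (hx : PiecewiseC1On a b S x dx) {t : ℝ} (ht : t ∈ Ioo a b \ S) :
    HasDerivAt x (dx t) t :=
  (hx.2.2.1 t ⟨Ioo_subset_Icc_self ht.1, ht.2⟩).hasDerivAt (Icc_mem_nhds ht.1.1 ht.1.2)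

theorem intervalIntegrable_comp [ProperSpace E] {F : Type*} [NormedAddCommGroup F]
    (hx : PiecewiseC1On a b S x dx) (hab : a ≤ b) {G : ℝ × E × E → F} (hG : Continuous G) :
    IntervalIntegrable (fun t => G (t, x t, dx t)) volume a b := by
  obtain ⟨hxc, ⟨M, hM⟩, -, hdxc⟩ := hx
  have hnull : volume (S : Set ℝ) = 0 := S.finite_toSet.measure_zero _
  have hmeas : AEStronglyMeasurable (fun t => G (t, x t, dx t)) (volume.restrict (Icc a b)) := by
    rw [← Measure.restrict_congr_set (sdiff_null_ae_eq_self hnull)]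
    refine (hG.comp_continuousOn ?_).aestronglyMeasurable
      (measurableSet_Icc.diff S.finite_toSet.measurableSet)
    exact continuousOn_id.prodMk ((hxc.mono sdiff_subset).prodMk hdxc)
  have hK : IsCompact (Icc a b ×ˢ (x '' Icc a b) ×ˢ Metric.closedBall (0 : E) M) :=
    isCompact_Icc.prod ((isCompact_Icc.image_of_continuousOn hxc).prod (isCompact_closedBall _ _))
  obtain ⟨C, hC⟩ := hK.exists_bound_of_continuousOn hG.continuousOn
  rw [intervalIntegrable_iff_integrableOn_Icc_of_le hab]
  refine Integrable.of_bound hmeas C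
    ((ae_restrict_iff' measurableSet_Icc).2 (ae_of_all _ fun t ht => ?_))
  exact hC _ ⟨ht, mem_image_of_mem x ht, mem_closedBall_zero_iff.2 (hM t ht)⟩

end NormedSpace

variable [InnerProductSpace ℝ E] [ProperSpace E]

theorem intervalIntegrable_inner_add_inner (hy : PiecewiseC1On a b S y dy) (hab : a ≤ b)
    {P p : ℝ → E} (hP : Continuous P) (hp : Continuous p) :
    IntervalIntegrable (fun t => ⟪p t, y t⟫ + ⟪P t, dy t⟫) volume a b :=
  hy.intervalIntegrable_comp hab (G := fun z => ⟪p z.1, z.2.1⟫ + ⟪P z.1, z.2.2⟫) (by fun_prop)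

theorem integral_inner_add_inner_eq (hy : PiecewiseC1On a b S y dy) (hab : a ≤ b)
    {P p : ℝ → E} (hP : ∀ t, HasDerivAt P (p t) t) (hp : Continuous p) :
    ∫ t in a..b, (⟪p t, y t⟫ + ⟪P t, dy t⟫) = ⟪P b, y b⟫ - ⟪P a, y a⟫ := by
  have hPc : Continuous P := continuous_iff_continuousAt.2 fun t => (hP t).continuousAt
  refine integral_eq_of_hasDerivAt_off_countable_of_le (fun t => ⟪P t, y t⟫) _ hab
    S.countable_toSet (hPc.continuousOn.inner hy.1) (fun t ht => ?_)
    (hy.intervalIntegrable_inner_add_inner hab hPc hp)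
  simpa only [add_comm] using (hP t).inner ℝ (hy.hasDerivAt ht)

end PiecewiseC1On

variable {E : Type*} [NormedAddCommGroup E] [InnerProductSpace ℝ E] [ProperSpace E]

theorem integral_le_of_forall_subgradient {a b : ℝ} (hab : a ≤ b) {L : ℝ → E → ℝ}
    (hL : Continuous fun p : ℝ × E => L p.1 p.2) {q P : ℝ → E} (hq : Continuous q)
    (hP : ∀ t, HasDerivAt P (q t) t) {S S' : Finset ℝ} {xbar dxbar x dx : ℝ → E}
    (hxbar : PiecewiseC1On a b S xbar dxbar) (hx : PiecewiseC1On a b S' x dx)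
    (ha : x a = xbar a) (hb : x b = xbar b)
    (hsub : ∀ t ∈ Icc a b \ S, ∀ v, L t (dxbar t) + ⟪P t, v - dxbar t⟫ ≤ L t v) :
    ∫ t in a..b, (L t (dxbar t) + ⟪q t, xbar t⟫) ≤ ∫ t in a..b, (L t (dx t) + ⟪q t, x t⟫) := by
  have hy := hx.sub hxbar
  have hPc : Continuous P := continuous_iff_continuousAt.2 fun t => (hP t).continuousAt
  have hparts : ∫ t in a..b, (⟪q t, (x - xbar) t⟫ + ⟪P t, (dx - dxbar) t⟫) = 0 := by
    rw [hy.integral_inner_add_inner_eq hab hP hq]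
    simp [ha, hb]
  have hint {T : Finset ℝ} {z dz : ℝ → E} (hz : PiecewiseC1On a b T z dz) :
      IntervalIntegrable (fun t => L t (dz t) + ⟪q t, z t⟫) volume a b :=
    hz.intervalIntegrable_comp hab (G := fun p => L p.1 p.2.2 + ⟪q p.1, p.2.1⟫)
      ((hL.comp (continuous_fst.prodMk continuous_snd.snd)).add
        ((hq.comp continuous_fst).inner continuous_snd.fst))
  calc ∫ t in a..b, (L t (dxbar t) + ⟪q t, xbar t⟫)
      = (∫ t in a..b, (L t (dxbar t) + ⟪q t, xbar t⟫)) +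
          ∫ t in a..b, (⟪q t, (x - xbar) t⟫ + ⟪P t, (dx - dxbar) t⟫) := by
        rw [hparts, add_zero]
    _ = ∫ t in a..b, (L t (dxbar t) + ⟪q t, xbar t⟫ +
          (⟪q t, (x - xbar) t⟫ + ⟪P t, (dx - dxbar) t⟫)) :=
        (intervalIntegral.integral_add (hint hxbar)
          (hy.intervalIntegrable_inner_add_inner hab hPc hq)).symm
    _ ≤ ∫ t in a..b, (L t (dx t) + ⟪q t, x t⟫) := by
      refine intervalIntegral.integral_mono_ae_restrict hab
        ((hint hxbar).add (hy.intervalIntegrable_inner_add_inner hab hPc hq)) (hint hx) ?_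
      filter_upwards [ae_restrict_mem measurableSet_Icc,
        ae_restrict_of_ae (S.countable_toSet.ae_notMem volume)] with t ht htS
      have hsub_t := hsub t ⟨ht, htS⟩ (dx t)
      simp only [Pi.sub_apply, inner_sub_right] at hsub_t ⊢
      linarith

theorem stmt5_general {n : ℕ} (t₀ t₁ : ℝ) (hlt : t₀ < t₁)
    (L0 : ℝ → EuclideanSpace ℝ (Fin n) → ℝ)
    (DL0 : ℝ → EuclideanSpace ℝ (Fin n) → EuclideanSpace ℝ (Fin n))
    (q : ℝ → EuclideanSpace ℝ (Fin n))
    (hL0 : Continuous fun p : ℝ × EuclideanSpace ℝ (Fin n) => L0 p.1 p.2)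
    (hq : Continuous q)
    (xbar dxbar : ℝ → EuclideanSpace ℝ (Fin n)) (S : Finset ℝ)
    (hxbar : PiecewiseC1On t₀ t₁ S xbar dxbar)
    (c : EuclideanSpace ℝ (Fin n))
    (heuler : ∀ t ∈ Set.Icc t₀ t₁ \ (S : Set ℝ),
      DL0 t (dxbar t) - ∫ ν in t₀..t, q ν = c)
    (hweier : ∀ t ∈ Set.Icc t₀ t₁ \ (S : Set ℝ), ∀ ξ : EuclideanSpace ℝ (Fin n),
      L0 t (dxbar t + ξ) - L0 t (dxbar t) - ⟪DL0 t (dxbar t), ξ⟫ ≥ 0)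
    (x dx : ℝ → EuclideanSpace ℝ (Fin n)) (S' : Finset ℝ)
    (hx : PiecewiseC1On t₀ t₁ S' x dx)
    (hb0 : x t₀ = xbar t₀) (hb1 : x t₁ = xbar t₁) :
    (∫ t in t₀..t₁, (L0 t (dx t) + ⟪q t, x t⟫)) ≥
      ∫ t in t₀..t₁, (L0 t (dxbar t) + ⟪q t, xbar t⟫) := by
  have hprimitive (t : ℝ) : HasDerivAt (fun s => c + ∫ ν in t₀..s, q ν) (q t) t :=
    (intervalIntegral.integral_hasDerivAt_right (hq.intervalIntegrable _ _)
      (hq.stronglyMeasurableAtFilter _ _) hq.continuousAt).const_add c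
  refine integral_le_of_forall_subgradient hlt.le hL0 hq hprimitive hxbar hx hb0 hb1 ?_
  intro t ht v
  have hexcess := hweier t ht (v - dxbar t)
  rw [add_sub_cancel] at hexcess
  rw [← heuler t ht, sub_add_cancel]
  linarith

/-- Sufficiency for integrands linear in `x`: if `L(t,x,ẋ) = L⁰(t,ẋ) + ⟪q(t),x⟫`
with the integral Euler equation and the Weierstrass condition
`E(L⁰)(t, x̄', x̄' + ξ) ≥ 0` (all `ξ ∈ ℝⁿ`) along the extremal `x̄`, then `x̄`
is an absolute minimizer. -/
theorem stmt5 {n : ℕ} (t₀ t₁ : ℝ) (hlt : t₀ < t₁)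
    (L0 : ℝ → EuclideanSpace ℝ (Fin n) → ℝ)
    (DL0 : ℝ → EuclideanSpace ℝ (Fin n) → EuclideanSpace ℝ (Fin n))
    (q : ℝ → EuclideanSpace ℝ (Fin n))
    (hL0 : Continuous fun p : ℝ × EuclideanSpace ℝ (Fin n) => L0 p.1 p.2)
    (hDL0 : Continuous fun p : ℝ × EuclideanSpace ℝ (Fin n) => DL0 p.1 p.2)
    (hgrad : ∀ t y, HasGradientAt (L0 t) (DL0 t y) y)
    (hq : Continuous q)
    (xbar dxbar : ℝ → EuclideanSpace ℝ (Fin n)) (S : Finset ℝ)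
    (hxbar : PiecewiseC1On t₀ t₁ S xbar dxbar)
    (c : EuclideanSpace ℝ (Fin n))
    (heuler : ∀ t ∈ Set.Icc t₀ t₁ \ (S : Set ℝ),
      DL0 t (dxbar t) - ∫ ν in t₀..t, q ν = c)
    (hweier : ∀ t ∈ Set.Icc t₀ t₁ \ (S : Set ℝ), ∀ ξ : EuclideanSpace ℝ (Fin n),
      L0 t (dxbar t + ξ) - L0 t (dxbar t) - ⟪DL0 t (dxbar t), ξ⟫ ≥ 0)
    (x dx : ℝ → EuclideanSpace ℝ (Fin n)) (S' : Finset ℝ)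
    (hx : PiecewiseC1On t₀ t₁ S' x dx)
    (hb0 : x t₀ = xbar t₀) (hb1 : x t₁ = xbar t₁) :
    (∫ t in t₀..t₁, (L0 t (dx t) + ⟪q t, x t⟫)) ≥
      ∫ t in t₀..t₁, (L0 t (dxbar t) + ⟪q t, xbar t⟫) :=
  stmt5_general t₀ t₁ hlt L0 DL0 q hL0 hq xbar dxbar S hxbar c heuler hweier x dx S' hx hb0 hb1
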